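/- arXiv:0707.3894 — 2 statements merged into one kernel-verified Lean document; each statement's English description precedes it below -/
import Mathlib

section
/- Let R be a Kähler algebraic curvature tensor on (V, J) and let u, v be unit vectors with ⟨u,v⟩ = ⟨u,Jv⟩ = 0. If both R^iso(u,Ju,v,Jv) = 0 and R^iso(u,Ju,Jv,v) = 0, then R(u,Ju,v,Jv) = 0 and R(u,v,u,v) + R(u,Jv,u,Jv) = 0. -/
/-!
The Kähler symmetry together with `J² = -1` gives `R(Jx, y, ·, ·) = -R(x, Jy, ·, ·)`, so on the
frame `(u, Ju, v, Jv)` the four sectional terms of `Riso` pair up: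
`Riso(u,Ju,v,Jv) = 2 (R(u,v,u,v) + R(u,Jv,u,Jv)) - 2 R(u,Ju,v,Jv)`.
Swapping `v` and `Jv` only flips the sign of the last term, so the two vanishing conditions
are a sum and a difference from which both conclusions follow.
-/

open scoped RealInnerProductSpace

/-- The isotropic-curvature expression of an algebraic curvature tensor on a 4-frame. -/
def isoCurv {E : Type*} [NormedAddCommGroup E] [InnerProductSpace ℝ E]
    (R : E →ₗ[ℝ] E →ₗ[ℝ] E →ₗ[ℝ] E →ₗ[ℝ] ℝ) (e₁ e₂ e₃ e₄ : E) : ℝ :=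
  R e₁ e₃ e₁ e₃ + R e₁ e₄ e₁ e₄ + R e₂ e₃ e₂ e₃ + R e₂ e₄ e₂ e₄ - 2 * R e₁ e₂ e₃ e₄

section CurvatureTensor

variable {E : Type*} [AddCommGroup E] [Module ℝ E]
  {R : E →ₗ[ℝ] E →ₗ[ℝ] E →ₗ[ℝ] E →ₗ[ℝ] ℝ} {J : E →ₗ[ℝ] E}

theorem curv_antisymm_right (hA : ∀ x y z w, R x y z w = - R y x z w)
    (hP : ∀ x y z w, R x y z w = R z w x y) (x y z w : E) :
    R x y z w = - R x y w z := by
  rw [hP, hA, ← hP]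

theorem curv_J_left (hJ2 : ∀ x, J (J x) = -x)
    (hK : ∀ x y z w, R (J x) (J y) z w = R x y z w) (x y z w : E) :
    R (J x) y z w = - R x (J y) z w := by
  have h := hK x (J y) z w
  simp only [hJ2, map_neg, LinearMap.neg_apply] at h
  linarith

theorem curv_J_J_sectional (hP : ∀ x y z w, R x y z w = R z w x y)
    (hK : ∀ x y z w, R (J x) (J y) z w = R x y z w) (x y : E) :
    R (J x) (J y) (J x) (J y) = R x y x y := by
  rw [hK, hP, hK]

theorem curv_J_left_sectional (hP : ∀ x y z w, R x y z w = R z w x y)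
    (hJ2 : ∀ x, J (J x) = -x) (hK : ∀ x y z w, R (J x) (J y) z w = R x y z w) (x y : E) :
    R (J x) y (J x) y = R x (J y) x (J y) := by
  rw [curv_J_left hJ2 hK, hP x (J y), curv_J_left hJ2 hK, neg_neg]

end CurvatureTensor

section IsotropicCurvature

variable {E : Type*} [NormedAddCommGroup E] [InnerProductSpace ℝ E]
  {R : E →ₗ[ℝ] E →ₗ[ℝ] E →ₗ[ℝ] E →ₗ[ℝ] ℝ}

theorem isoCurv_swap_right (hA : ∀ x y z w, R x y z w = - R y x z w)
    (hP : ∀ x y z w, R x y z w = R z w x y) (e₁ e₂ e₃ e₄ : E) :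
    isoCurv R e₁ e₂ e₄ e₃ = isoCurv R e₁ e₂ e₃ e₄ + 4 * R e₁ e₂ e₃ e₄ := by
  simp only [isoCurv, curv_antisymm_right hA hP e₁ e₂ e₄ e₃]
  ring

theorem isoCurv_J_frame {J : E →ₗ[ℝ] E} (hP : ∀ x y z w, R x y z w = R z w x y)
    (hJ2 : ∀ x, J (J x) = -x) (hK : ∀ x y z w, R (J x) (J y) z w = R x y z w) (u v : E) :
    isoCurv R u (J u) v (J v) =
      2 * (R u v u v + R u (J v) u (J v)) - 2 * R u (J u) v (J v) := by
  rw [isoCurv, curv_J_left_sectional hP hJ2 hK, curv_J_J_sectional hP hK]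
  ring

end IsotropicCurvature

theorem kaehler_isoCurv_vanishing_general
    {E : Type*} [NormedAddCommGroup E] [InnerProductSpace ℝ E]
    (R : E →ₗ[ℝ] E →ₗ[ℝ] E →ₗ[ℝ] E →ₗ[ℝ] ℝ)
    (hA : ∀ x y z w, R x y z w = - R y x z w)
    (hP : ∀ x y z w, R x y z w = R z w x y)
    (J : E →ₗ[ℝ] E)
    (hJ2 : ∀ x, J (J x) = -x)
    (hK : ∀ x y z w, R (J x) (J y) z w = R x y z w)
    (u v : E)
    (h1 : isoCurv R u (J u) v (J v) = 0)
    (h2 : isoCurv R u (J u) (J v) v = 0) :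
    R u (J u) v (J v) = 0 ∧ R u v u v + R u (J v) u (J v) = 0 := by
  have hmixed : R u (J u) v (J v) = 0 := by
    have := isoCurv_swap_right hA hP u (J u) v (J v)
    linarith
  refine ⟨hmixed, ?_⟩
  have := isoCurv_J_frame hP hJ2 hK u v
  linarith

/-- For a Kähler algebraic curvature tensor `R` on `(V, J)` and unit
vectors `u, v` with `⟪u,v⟫ = ⟪u,Jv⟫ = 0`, if both `Riso(u,Ju,v,Jv) = 0` and
`Riso(u,Ju,Jv,v) = 0` then `R(u,Ju,v,Jv) = 0` and `R(u,v,u,v) + R(u,Jv,u,Jv) = 0`. -/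
theorem kaehler_isoCurv_vanishing
    {E : Type*} [NormedAddCommGroup E] [InnerProductSpace ℝ E]
    (R : E →ₗ[ℝ] E →ₗ[ℝ] E →ₗ[ℝ] E →ₗ[ℝ] ℝ)
    (hA : ∀ x y z w, R x y z w = - R y x z w)
    (hP : ∀ x y z w, R x y z w = R z w x y)
    (hB1 : ∀ x y z w, R x y z w + R y z x w + R z x y w = 0)
    (J : E →ₗ[ℝ] E)
    (hJ2 : ∀ x, J (J x) = -x)
    (hJO : ∀ x y, ⟪J x, J y⟫ = ⟪x, y⟫)
    (hK : ∀ x y z w, R (J x) (J y) z w = R x y z w)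
    (u v : E) (hu : ‖u‖ = 1) (hv : ‖v‖ = 1)
    (huv : ⟪u, v⟫ = 0) (huJv : ⟪u, J v⟫ = 0)
    (h1 : isoCurv R u (J u) v (J v) = 0)
    (h2 : isoCurv R u (J u) (J v) v = 0) :
    R u (J u) v (J v) = 0 ∧ R u v u v + R u (J v) u (J v) = 0 :=
  kaehler_isoCurv_vanishing_general R hA hP J hJ2 hK u v h1 h2
end

section
/- Let R be a Kähler algebraic curvature tensor on (V,J), and suppose u, v are orthonormal vectors with ⟨u,Jv⟩ = 0 and R(u,Ju,v,Jv) = R(u,Jv,u,Jv) + R(u,v,u,v) = 0. Suppose further that the same vanishing holds after the unitary rotation u ↦ (u − Jv)/√2, v ↦ (u + Jv)/√2. Then R(u,Ju,u,Ju) + R(v,Jv,v,Jv) − 4R(u,v,u,v) = 0. -/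
/-! By `J`-invariance and antisymmetry, `R (u ∓ J v) (J (u ∓ J v)) = R u (J u) ± 2 R u v + R v (J v)`
as bilinear forms, so pair symmetry gives
`4 R(u', Ju', v', Jv') = R(u,Ju,u,Ju) + 2 R(u,Ju,v,Jv) + R(v,Jv,v,Jv) − 4 R(u,v,u,v)`.
The vanishing of `R(u,Ju,v,Jv)` and of `R(u',Ju',v',Jv')` then yields the identity. -/

open scoped RealInnerProductSpace

theorem LinearMap.map_sub₄ {k E F G H M : Type*} [CommRing k] [AddCommGroup E] [AddCommGroup F]
    [AddCommGroup G] [AddCommGroup H] [AddCommGroup M] [Module k E] [Module k F] [Module k G]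
    [Module k H] [Module k M] (f : E →ₗ[k] F →ₗ[k] G →ₗ[k] H →ₗ[k] M) (x y : E) (a : F) (b : G)
    (c : H) : f (x - y) a b c = f x a b c - f y a b c := by
  rw [sub_eq_add_neg, ← neg_one_smul k y, map_add, map_smul]
  simp only [LinearMap.add_apply, LinearMap.smul_apply, neg_one_smul,
    LinearMap.neg_apply, sub_eq_add_neg]

theorem LinearMap.apply_smul_J_apply_smul_J {k E : Type*} [CommRing k] [AddCommGroup E] [Module k E]
    (R : E →ₗ[k] E →ₗ[k] E →ₗ[k] E →ₗ[k] k) (J : E →ₗ[k] E) (c d : k) (x y : E) :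
    R (c • x) (J (c • x)) (d • y) (J (d • y)) = c ^ 2 * d ^ 2 * R x (J x) y (J y) := by
  simp only [map_smul, LinearMap.smul_apply, smul_eq_mul]
  ring

section KaehlerCurvature

variable {k E : Type*} [CommRing k] [AddCommGroup E] [Module k E]
  {R : E →ₗ[k] E →ₗ[k] E →ₗ[k] E →ₗ[k] k} {J : E →ₗ[k] E}

theorem kaehler_add_J_apply (hA : ∀ x y z w, R x y z w = - R y x z w)
    (hK : ∀ x y z w, R (J x) (J y) z w = R x y z w) (hJ2 : ∀ x, J (J x) = -x) (u v z w : E) :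
    R (u + J v) (J (u + J v)) z w = R u (J u) z w - 2 * R u v z w + R v (J v) z w := by
  have hJvJu : R (J v) (J u) z w = - R u v z w := by rw [hK, hA]
  have hJvv : R (J v) v z w = - R v (J v) z w := hA _ _ _ _
  simp only [map_add, hJ2, LinearMap.add_apply, map_neg, LinearMap.neg_apply, hJvJu, hJvv]
  ring

theorem kaehler_sub_J_apply (hA : ∀ x y z w, R x y z w = - R y x z w)
    (hK : ∀ x y z w, R (J x) (J y) z w = R x y z w) (hJ2 : ∀ x, J (J x) = -x) (u v z w : E) :
    R (u - J v) (J (u - J v)) z w = R u (J u) z w + 2 * R u v z w + R v (J v) z w := by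
  have hJvJu : R (J v) (J u) z w = - R u v z w := by rw [hK, hA]
  have hJvv : R (J v) v z w = - R v (J v) z w := hA _ _ _ _
  simp only [R.map_sub₄, map_sub, hJ2, sub_neg_eq_add, map_add, LinearMap.add_apply, hJvJu, hJvv]
  ring

theorem kaehler_sub_J_add_J (hA : ∀ x y z w, R x y z w = - R y x z w)
    (hP : ∀ x y z w, R x y z w = R z w x y) (hK : ∀ x y z w, R (J x) (J y) z w = R x y z w)
    (hJ2 : ∀ x, J (J x) = -x) (u v : E) :
    R (u - J v) (J (u - J v)) (u + J v) (J (u + J v)) =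
      R u (J u) u (J u) + 2 * R u (J u) v (J v) + R v (J v) v (J v) - 4 * R u v u v := by
  simp only [kaehler_sub_J_apply hA hK hJ2, hP _ _ (u + J v), kaehler_add_J_apply hA hK hJ2]
  linear_combination hP v (J v) u (J u) + 2 * hP u (J u) u v - 2 * hP v (J v) u v
    - 4 * hP u v v (J v)

end KaehlerCurvature

theorem kaehler_rotation_identity_general
    {E : Type*} [NormedAddCommGroup E] [InnerProductSpace ℝ E]
    (R : E →ₗ[ℝ] E →ₗ[ℝ] E →ₗ[ℝ] E →ₗ[ℝ] ℝ)
    (hA : ∀ x y z w, R x y z w = - R y x z w)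
    (hP : ∀ x y z w, R x y z w = R z w x y)
    (J : E →ₗ[ℝ] E)
    (hJ2 : ∀ x, J (J x) = -x)
    (hK : ∀ x y z w, R (J x) (J y) z w = R x y z w)
    (u v : E)
    (h1 : R u (J u) v (J v) = 0)
    (h1' : R ((Real.sqrt 2)⁻¹ • (u - J v)) (J ((Real.sqrt 2)⁻¹ • (u - J v)))
            ((Real.sqrt 2)⁻¹ • (u + J v)) (J ((Real.sqrt 2)⁻¹ • (u + J v))) = 0) :
    R u (J u) u (J u) + R v (J v) v (J v) - 4 * R u v u v = 0 := by
  have hrot : R (u - J v) (J (u - J v)) (u + J v) (J (u + J v)) = 0 := by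
    rw [R.apply_smul_J_apply_smul_J] at h1'
    simpa using h1'
  rw [kaehler_sub_J_add_J hA hP hK hJ2] at hrot
  linear_combination hrot - 2 * h1

/-- Let `R` be a Kähler algebraic curvature tensor on `(V,J)` and `u, v`
orthonormal with `⟪u,Jv⟫ = 0`, with `R(u,Ju,v,Jv) = 0` and
`R(u,Jv,u,Jv) + R(u,v,u,v) = 0`.  If the same vanishing holds for the rotated pair
`u' = (u − Jv)/√2`, `v' = (u + Jv)/√2`, then
`R(u,Ju,u,Ju) + R(v,Jv,v,Jv) − 4 R(u,v,u,v) = 0`. -/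
theorem kaehler_rotation_identity
    {E : Type*} [NormedAddCommGroup E] [InnerProductSpace ℝ E]
    (R : E →ₗ[ℝ] E →ₗ[ℝ] E →ₗ[ℝ] E →ₗ[ℝ] ℝ)
    (hA : ∀ x y z w, R x y z w = - R y x z w)
    (hP : ∀ x y z w, R x y z w = R z w x y)
    (hB1 : ∀ x y z w, R x y z w + R y z x w + R z x y w = 0)
    (J : E →ₗ[ℝ] E)
    (hJ2 : ∀ x, J (J x) = -x)
    (hJO : ∀ x y, ⟪J x, J y⟫ = ⟪x, y⟫)
    (hK : ∀ x y z w, R (J x) (J y) z w = R x y z w)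
    (u v : E) (hu : ‖u‖ = 1) (hv : ‖v‖ = 1)
    (huv : ⟪u, v⟫ = 0) (huJv : ⟪u, J v⟫ = 0)
    (h1 : R u (J u) v (J v) = 0)
    (h2 : R u (J v) u (J v) + R u v u v = 0)
    (h1' : R ((Real.sqrt 2)⁻¹ • (u - J v)) (J ((Real.sqrt 2)⁻¹ • (u - J v)))
            ((Real.sqrt 2)⁻¹ • (u + J v)) (J ((Real.sqrt 2)⁻¹ • (u + J v))) = 0)
    (h2' : R ((Real.sqrt 2)⁻¹ • (u - J v)) (J ((Real.sqrt 2)⁻¹ • (u + J v)))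
            ((Real.sqrt 2)⁻¹ • (u - J v)) (J ((Real.sqrt 2)⁻¹ • (u + J v)))
          + R ((Real.sqrt 2)⁻¹ • (u - J v)) ((Real.sqrt 2)⁻¹ • (u + J v))
              ((Real.sqrt 2)⁻¹ • (u - J v)) ((Real.sqrt 2)⁻¹ • (u + J v)) = 0) :
    R u (J u) u (J u) + R v (J v) v (J v) - 4 * R u v u v = 0 :=
  kaehler_rotation_identity_general R hA hP J hJ2 hK u v h1 h1'
end
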